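/- Let G = (V,E) be a simple graph on n ≥ 2 vertices, let ε ∈ [0,1], and let X be a random subset of V obtained by including each vertex independently with probability 1/(9n^ε). Then for any real number m̄ ≥ √(54 n^{1+ε} ln n), with probability at least 1 − 1/n the following holds: for every set U ⊆ V, at most |U|/2 vertices of U are not m̄-good for (U,X). -/

import Mathlib

/-!
Call a pair of vertices heavy if it has at least `t = 27 n^ε ln n` common neighbours. With
`p = 1/(9 n^ε)`, a heavy pair lies in `Δ(X)` with probability `(1 - p)^t ≤ e^{-pt} = n⁻³`, so by a
union bound over the `n²` pairs, with probability at least `1 - 1/n` no heavy pair lies in `Δ(X)`.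
In that event every vertex is good for every `U`: if `j` had more than `m̄` neighbours `k` with
`|S(j,k)| > m̄`, there would be more than `m̄² ≥ 2nt` pairs `(k, l)` with `l ∈ S(j,k)`; but every
such `l` forms a light pair with `j`, so it occurs for fewer than `t` values of `k`, which bounds
the number of pairs by `|U| t ≤ n t`.
-/

open MeasureTheory

variable {V : Type*} [Fintype V] [DecidableEq V]

/-- `m({j,l})`: the number of common neighbors of `j` and `l` in `G`. -/
def commonNbrs (G : SimpleGraph V) [DecidableRel G.Adj] (j l : V) : ℕ :=
  (Finset.univ.filter fun k => G.Adj j k ∧ G.Adj l k).card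

/-- `{u,v} ∈ Δ(X)`: no vertex of `X` is adjacent to both `u` and `v`. -/
def inDelta (G : SimpleGraph V) (X : Finset V) (u v : V) : Prop :=
  ∀ x ∈ X, ¬ (G.Adj x u ∧ G.Adj x v)

instance (G : SimpleGraph V) [DecidableRel G.Adj] (X : Finset V) (u v : V) :
    Decidable (inDelta G X u v) := by unfold inDelta; infer_instance

/-- `S^X_U(j,k) = {l ∈ U : {j,l} ∈ Δ(X) and {k,l} ∈ E}`. -/
def Sset (G : SimpleGraph V) [DecidableRel G.Adj] (X U : Finset V) (j k : V) : Finset V :=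
  U.filter fun l => l ≠ j ∧ inDelta G X j l ∧ G.Adj k l

/-- `T^X_U(j) = {k ∈ U : {j,k} ∈ E and |S^X_U(j,k)| > m̄}`. -/
noncomputable def Tset (G : SimpleGraph V) [DecidableRel G.Adj] (X U : Finset V) (mb : ℝ)
    (j : V) : Finset V :=
  U.filter fun k => G.Adj j k ∧ mb < ((Sset G X U j k).card : ℝ)

/-- A vertex `j ∈ U` is `m̄`-good for `(U, X)` if `|T^X_U(j)| ≤ m̄`. -/
def IsGood (G : SimpleGraph V) [DecidableRel G.Adj] (X U : Finset V) (mb : ℝ) (j : V) : Prop :=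
  ((Tset G X U mb j).card : ℝ) ≤ mb

noncomputable instance (G : SimpleGraph V) [DecidableRel G.Adj] (X U : Finset V) (mb : ℝ) (j : V) :
    Decidable (IsGood G X U mb j) := by unfold IsGood; infer_instance

open Finset

def HitsHeavyPairs (G : SimpleGraph V) [DecidableRel G.Adj] (t : ℝ) (X : Finset V) : Prop :=
  ∀ u v : V, t ≤ (commonNbrs G u v : ℝ) → ¬ inDelta G X u v

section Deterministic

variable (G : SimpleGraph V) [DecidableRel G.Adj] (X U : Finset V)

theorem sum_card_Sset_le_sum_commonNbrs {j : V} {K : Finset V} (hK : ∀ k ∈ K, G.Adj j k) :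
    ∑ k ∈ K, #(Sset G X U j k) ≤ ∑ l ∈ U with l ≠ j ∧ inDelta G X j l, commonNbrs G j l := by
  let r : V → V → Prop := fun k l => l ≠ j ∧ inDelta G X j l ∧ G.Adj k l
  calc ∑ k ∈ K, #(Sset G X U j k) = ∑ l ∈ U, #(K.bipartiteBelow r l) :=
        sum_card_bipartiteAbove_eq_sum_card_bipartiteBelow r
    _ = ∑ l ∈ U with l ≠ j ∧ inDelta G X j l, #(K.bipartiteBelow r l) := by
        refine (sum_filter_of_ne fun l _ hl => ?_).symm
        contrapose! hl
        exact card_eq_zero.2 (filter_false_of_mem fun k _ hk => hl hk.1 hk.2.1)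
    _ ≤ ∑ l ∈ U with l ≠ j ∧ inDelta G X j l, commonNbrs G j l := by
        refine sum_le_sum fun l _ => card_le_card fun k hk => ?_
        simp only [bipartiteBelow, r, mem_filter] at hk
        simp [hK k hk.1, hk.2.2.2.symm]

theorem mul_card_Tset_le_sum_card_Sset (mb : ℝ) (j : V) :
    mb * #(Tset G X U mb j) ≤ ∑ k ∈ Tset G X U mb j, (#(Sset G X U j k) : ℝ) := by
  rw [mul_comm, ← nsmul_eq_mul]
  exact card_nsmul_le_sum _ _ _ fun k hk => (mem_filter.1 hk).2.2.le

theorem isGood_of_hitsHeavyPairs {mb t : ℝ} (hmb : 0 < mb) (ht : 0 ≤ t)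
    (hU : #U * t ≤ mb ^ 2) (hX : HitsHeavyPairs G t X) (j : V) : IsGood G X U mb j := by
  by_contra hbad
  rw [IsGood, not_le] at hbad
  have hlight : ∀ l ∈ {l ∈ U | l ≠ j ∧ inDelta G X j l}, (commonNbrs G j l : ℝ) ≤ t :=
    fun l hl => (lt_of_not_ge fun h => hX j l h (mem_filter.1 hl).2.2).le
  have hpairs : ∑ k ∈ Tset G X U mb j, (#(Sset G X U j k) : ℝ) ≤ #U * t :=
    calc ∑ k ∈ Tset G X U mb j, (#(Sset G X U j k) : ℝ)
        ≤ ∑ l ∈ U with l ≠ j ∧ inDelta G X j l, (commonNbrs G j l : ℝ) := by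
          exact_mod_cast sum_card_Sset_le_sum_commonNbrs G X U
            fun k (hk : k ∈ Tset G X U mb j) => (mem_filter.1 hk).2.1
      _ ≤ #(U.filter fun l => l ≠ j ∧ inDelta G X j l) • t := sum_le_card_nsmul _ _ _ hlight
      _ ≤ #U * t := by
          rw [nsmul_eq_mul]
          gcongr
          exact filter_subset _ _
  nlinarith [mul_card_Tset_le_sum_card_Sset G X U mb j]

end Deterministic

section Probability

variable {Ω : Type*} [MeasurableSpace Ω] {μ : Measure Ω} {X : Ω → Finset V} {p : ℝ}

theorem measurableSet_setOf_of_measurableSet_fiber {α : Type*} [Finite α] {Y : Ω → α}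
    (hY : ∀ a, MeasurableSet {ω | Y ω = a}) (P : α → Prop) : MeasurableSet {ω | P (Y ω)} := by
  have h : {ω | P (Y ω)} = ⋃ a ∈ {a | P a}, {ω | Y ω = a} := by ext; simp
  rw [h]
  exact MeasurableSet.biUnion (Set.to_countable _) fun a _ => hY a

theorem measureReal_setOf_disjoint [IsFiniteMeasure μ] (hmeas : ∀ F, MeasurableSet {ω | X ω = F})
    (hdist : ∀ F, μ.real {ω | X ω = F} = p ^ #F * (1 - p) ^ (Fintype.card V - #F))
    (B : Finset V) : μ.real {ω | Disjoint (X ω) B} = (1 - p) ^ #B := by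
  have hset : {ω | Disjoint (X ω) B} = X ⁻¹' ↑(Bᶜ.powerset) := by
    ext ω
    rw [Set.mem_preimage, mem_coe, mem_powerset, subset_compl_iff_disjoint_right]
    rfl
  rw [hset, ← sum_measureReal_preimage_singleton _ fun F _ => hmeas F]
  calc ∑ F ∈ Bᶜ.powerset, μ.real (X ⁻¹' {F})
      = ∑ F ∈ Bᶜ.powerset, (1 - p) ^ #B * (p ^ #F * (1 - p) ^ (#Bᶜ - #F)) := by
        refine sum_congr rfl fun F hF => ?_
        have hF : #F ≤ #Bᶜ := card_le_card (mem_powerset.1 hF)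
        have hcard : Fintype.card V - #F = #B + (#Bᶜ - #F) := by
          have := card_compl_add_card B
          omega
        simp only [Set.preimage, Set.mem_singleton_iff]
        rw [hdist, hcard, pow_add]
        ring
    _ = (1 - p) ^ #B := by
        rw [← mul_sum, sum_pow_mul_eq_add_pow, add_sub_cancel, one_pow, mul_one]

theorem one_sub_pow_le_exp_neg_mul (hp : p ≤ 1) (s : ℕ) : (1 - p) ^ s ≤ Real.exp (-(p * s)) :=
  calc (1 - p) ^ s ≤ Real.exp (-p) ^ s := by
        gcongr
        exact Real.one_sub_le_exp_neg p
    _ = Real.exp (-(p * s)) := by rw [← Real.exp_nat_mul]; ring_nf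

theorem measureReal_not_hitsHeavyPairs_le [IsFiniteMeasure μ] (G : SimpleGraph V)
    [DecidableRel G.Adj] (hmeas : ∀ F, MeasurableSet {ω | X ω = F})
    (hdist : ∀ F, μ.real {ω | X ω = F} = p ^ #F * (1 - p) ^ (Fintype.card V - #F))
    (hp0 : 0 ≤ p) (hp1 : p ≤ 1) (t : ℝ) :
    μ.real {ω | ¬ HitsHeavyPairs G t (X ω)} ≤ Fintype.card V ^ 2 * Real.exp (-(p * t)) := by
  let D : Finset (V × V) := {uv | t ≤ (commonNbrs G uv.1 uv.2 : ℝ)}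
  let missed (uv : V × V) : Set Ω :=
    {ω | Disjoint (X ω) ({k | G.Adj uv.1 k ∧ G.Adj uv.2 k} : Finset V)}
  have hcover : {ω | ¬ HitsHeavyPairs G t (X ω)} ⊆ ⋃ uv ∈ D, missed uv := by
    intro ω hω
    obtain ⟨u, v, hheavy, hdelta⟩ : ∃ u v, t ≤ (commonNbrs G u v : ℝ) ∧ inDelta G (X ω) u v := by
      simpa [HitsHeavyPairs] using hω
    refine Set.mem_biUnion (x := (u, v)) (by simpa [D] using hheavy) ?_
    simpa [missed, inDelta, Finset.disjoint_left, SimpleGraph.adj_comm] using hdelta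
  have hmissed : ∀ uv ∈ D, μ.real (missed uv) ≤ Real.exp (-(p * t)) := by
    intro uv huv
    rw [measureReal_setOf_disjoint hmeas hdist]
    refine (one_sub_pow_le_exp_neg_mul hp1 _).trans (Real.exp_le_exp.2 ?_)
    have : t ≤ (commonNbrs G uv.1 uv.2 : ℝ) := (mem_filter.1 huv).2
    exact neg_le_neg (mul_le_mul_of_nonneg_left this hp0)
  calc μ.real {ω | ¬ HitsHeavyPairs G t (X ω)}
      ≤ ∑ uv ∈ D, μ.real (missed uv) :=
        (measureReal_mono hcover (measure_ne_top _ _)).trans (measureReal_biUnion_finset_le D missed)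
    _ ≤ #D • Real.exp (-(p * t)) := sum_le_card_nsmul _ _ _ hmissed
    _ ≤ Fintype.card V ^ 2 * Real.exp (-(p * t)) := by
        rw [nsmul_eq_mul]
        gcongr
        calc (#D : ℝ) ≤ Fintype.card (V × V) := by exact_mod_cast card_le_univ D
          _ = Fintype.card V ^ 2 := by rw [Fintype.card_prod]; push_cast; ring

theorem one_sub_le_measureReal_forall_isGood [IsProbabilityMeasure μ] (G : SimpleGraph V)
    [DecidableRel G.Adj] (hmeas : ∀ F, MeasurableSet {ω | X ω = F})
    (hdist : ∀ F, μ.real {ω | X ω = F} = p ^ #F * (1 - p) ^ (Fintype.card V - #F))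
    (hp0 : 0 ≤ p) (hp1 : p ≤ 1) {t mb : ℝ} (ht : 0 ≤ t) (hmb : 0 < mb)
    (htmb : Fintype.card V * t ≤ mb ^ 2) :
    1 - Fintype.card V ^ 2 * Real.exp (-(p * t)) ≤
      μ.real {ω | ∀ U j, IsGood G (X ω) U mb j} := by
  have hgood : {ω | HitsHeavyPairs G t (X ω)} ⊆ {ω | ∀ U j, IsGood G (X ω) U mb j} := by
    intro ω hω U
    have hU : (#U : ℝ) * t ≤ mb ^ 2 :=
      le_trans (by gcongr; exact_mod_cast card_le_univ U) htmb
    exact isGood_of_hitsHeavyPairs G (X ω) U hmb ht hU hω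
  have hsum := probReal_add_probReal_compl (μ := μ)
    (measurableSet_setOf_of_measurableSet_fiber hmeas (HitsHeavyPairs G t))
  rw [Set.compl_ofPred] at hsum
  have hmissed := measureReal_not_hitsHeavyPairs_le G hmeas hdist hp0 hp1 t
  exact le_trans (by linarith) (measureReal_mono hgood)

end Probability

theorem most_vertices_good_general
    {Ω : Type*} [MeasurableSpace Ω] (μ : Measure Ω) [IsProbabilityMeasure μ]
    (G : SimpleGraph V) [DecidableRel G.Adj]
    (n : ℕ) (hn : n = Fintype.card V) (hn2 : 2 ≤ n)
    (ε : ℝ) (hε0 : 0 ≤ ε)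
    (X : Ω → Finset V)
    (hmeas : ∀ F : Finset V, MeasurableSet {ω | X ω = F})
    (hdist : ∀ F : Finset V, (μ {ω | X ω = F}).toReal =
      (1 / (9 * (n : ℝ) ^ ε)) ^ F.card *
        (1 - 1 / (9 * (n : ℝ) ^ ε)) ^ (n - F.card))
    (mb : ℝ) (hmb : Real.sqrt (54 * (n : ℝ) ^ (1 + ε) * Real.log n) ≤ mb) :
    1 - 1 / (n : ℝ) ≤
      (μ {ω | ∀ U : Finset V,
        (((U.filter fun j => ¬ IsGood G (X ω) U mb j).card : ℝ)) ≤ (U.card : ℝ) / 2}).toReal := by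
  subst hn
  set n := Fintype.card V
  have hn1 : (1 : ℝ) < n := by exact_mod_cast hn2
  have hnε : 1 ≤ (n : ℝ) ^ ε := Real.one_le_rpow hn1.le hε0
  set p : ℝ := 1 / (9 * (n : ℝ) ^ ε)
  -- the heaviness threshold: `p t = 3 ln n` makes the union bound over `n²` pairs cost `1/n`
  set t : ℝ := 27 * (n : ℝ) ^ ε * Real.log n
  have hpt : p * t = 3 * Real.log n := by
    simp only [p, t]
    field_simp
    ring
  have htmb : 2 * (n * t) ≤ mb ^ 2 := by
    have hsq : 54 * (n : ℝ) ^ (1 + ε) * Real.log n = 2 * (n * t) := by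
      rw [Real.rpow_add (by positivity), Real.rpow_one]; ring
    exact (Real.sqrt_le_iff.1 (hsq ▸ hmb)).2
  have hbound : (n : ℝ) ^ 2 * Real.exp (-(p * t)) = 1 / n := by
    rw [hpt, Real.exp_neg, show (3 : ℝ) = (3 : ℕ) by norm_num, Real.exp_nat_mul,
      Real.exp_log (by positivity)]
    field_simp
  have ht : 0 ≤ t := by positivity
  have hmb0 : 0 < mb :=
    (Real.sqrt_pos.2 (mul_pos (by positivity) (Real.log_pos hn1))).trans_le hmb
  have hall := one_sub_le_measureReal_forall_isGood G hmeas hdist (by positivity)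
    (by rw [div_le_one (by positivity)]; linarith) ht hmb0
    (by linarith [mul_nonneg (Nat.cast_nonneg n) ht])
  refine (hbound ▸ hall).trans (measureReal_mono fun ω hω U => ?_)
  rw [filter_false_of_mem fun j _ => not_not.2 (hω U j), card_empty, Nat.cast_zero]
  positivity

/-- **Lemma 3 of the paper.**
Let `G = (V,E)` be a simple graph on `n ≥ 2` vertices, `ε ∈ [0,1]`, and let `X` be a
random subset of `V` obtained by including each vertex independently with probability
`1/(9 n^ε)`.  Then for any real number `m̄ ≥ √(54 n^{1+ε} ln n)`, with probability at
least `1 - 1/n` the following holds: for every set `U ⊆ V`, at most `|U|/2` vertices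
of `U` are not `m̄`-good for `(U, X)`. -/
theorem most_vertices_good
    {Ω : Type*} [MeasurableSpace Ω] (μ : Measure Ω) [IsProbabilityMeasure μ]
    (G : SimpleGraph V) [DecidableRel G.Adj]
    (n : ℕ) (hn : n = Fintype.card V) (hn2 : 2 ≤ n)
    (ε : ℝ) (hε0 : 0 ≤ ε) (hε1 : ε ≤ 1)
    (X : Ω → Finset V)
    (hmeas : ∀ F : Finset V, MeasurableSet {ω | X ω = F})
    (hdist : ∀ F : Finset V, (μ {ω | X ω = F}).toReal =
      (1 / (9 * (n : ℝ) ^ ε)) ^ F.card *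
        (1 - 1 / (9 * (n : ℝ) ^ ε)) ^ (n - F.card))
    (mb : ℝ) (hmb : Real.sqrt (54 * (n : ℝ) ^ (1 + ε) * Real.log n) ≤ mb) :
    1 - 1 / (n : ℝ) ≤
      (μ {ω | ∀ U : Finset V,
        (((U.filter fun j => ¬ IsGood G (X ω) U mb j).card : ℝ)) ≤ (U.card : ℝ) / 2}).toReal :=
  most_vertices_good_general μ G n hn hn2 ε hε0 X hmeas hdist mb hmb
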